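/- arXiv:1303.5869 — 3 statements merged into one kernel-verified Lean document; each statement's English description precedes it below -/
import Mathlib

section
/- Assume r ≥ 2 and ν ≥ q+r. Let K̄_*(z) ∈ ℝ^{(q+r−1)r×((q+r−1)r−q)} be the block matrix [[I_q⊗F(z) + S_q⊗F'(z), −ℓ_q·f^T ⊗ G(z)], [0, I_{r−1}⊗I_r − S_{r−1}⊗G(z)]], where ℓ_q is the last standard basis column vector of ℝ^q and f is the first standard basis column vector of ℝ^{r−1}. Then for every z ∈ ℝ the kernel of 𝓝^0(z), which has dimension νr − q, equals the set of all vectors (x_1, x_2) ∈ ℝ^{(q+r−1)r} × ℝ^{r(ν+1−q−r)} ≅ ℝ^{νr} such that x_1 lies in the column span of K̄_*(z) and x_2 is arbitrary. -/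
open Matrix Kronecker

noncomputable section

/-- The `k × k` shift matrix with `(i,j)` entry `δ_{i+1,j}`. -/
def Sh (k : ℕ) : Matrix (Fin k) (Fin k) ℝ :=
  Matrix.of fun i j => if (i : ℕ) + 1 = (j : ℕ) then 1 else 0

/-- The matrix `A^k(z) ∈ ℝ^{q×r}`, with entries
`k!/(i!·j!·(k−i−j)!)·z^{k−i−j} = C(k,i)·C(k−i,j)·z^{k−i−j}` for `i+j ≤ k`, else `0`. -/
def Amat (q r k : ℕ) (z : ℝ) : Matrix (Fin q) (Fin r) ℝ :=
  Matrix.of fun i j =>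
    if (i : ℕ) + (j : ℕ) ≤ k then
      (Nat.choose k i : ℝ) * (Nat.choose (k - i) j : ℝ) * z ^ (k - i - j)
    else 0

/-- The block matrix `𝒜(z) ∈ ℝ^{μq×νr}` with `(i,j)` block `A^{i+j}(z)`. -/
def Acal (q r μ ν : ℕ) (z : ℝ) : Matrix (Fin μ × Fin q) (Fin ν × Fin r) ℝ :=
  Matrix.of fun p p' => Amat q r ((p.1 : ℕ) + (p'.1 : ℕ)) z p.2 p'.2

/-- `A^0 = e₀ f₀ᵀ ∈ ℝ^{q×r}`. -/
def A0 (q r : ℕ) : Matrix (Fin q) (Fin r) ℝ :=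
  Matrix.of fun a b => if (a : ℕ) = 0 ∧ (b : ℕ) = 0 then 1 else 0

/-- The block matrix `Ā ∈ ℝ^{μq×νr}` with `(i,j)` block `(S_qᵀ)^j · A^0 · S_r^i`. -/
def Abar (q r μ ν : ℕ) : Matrix (Fin μ × Fin q) (Fin ν × Fin r) ℝ :=
  Matrix.of fun p p' =>
    (((Sh q)ᵀ) ^ (p'.1 : ℕ) * A0 q r * (Sh r) ^ (p.1 : ℕ)) p.2 p'.2

/-- `J_k(z) = z·I_k + S_kᵀ`. -/
def Jmat (k : ℕ) (z : ℝ) : Matrix (Fin k) (Fin k) ℝ := z • 1 + (Sh k)ᵀ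

/-- The block lower-triangular matrix `𝓛_{m,k}(z)` with `(i,j)` block `C(i,j)·J_k(z)^{i−j}`
for `i ≥ j` and `0` otherwise. -/
def Lmat (m k : ℕ) (z : ℝ) : Matrix (Fin m × Fin k) (Fin m × Fin k) ℝ :=
  Matrix.of fun p p' =>
    if (p'.1 : ℕ) ≤ (p.1 : ℕ) then
      (Nat.choose p.1 p'.1 : ℝ) * ((Jmat k z) ^ ((p.1 : ℕ) - (p'.1 : ℕ))) p.2 p'.2
    else 0

/-- Natural (block row-major) identification of `Fin (m*n)` with `Fin m × Fin n`. -/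
def bIdx (m n : ℕ) : Fin (m * n) → Fin m × Fin n := fun x => finProdFinEquiv.symm x

/-- `M^{(n)}(z) ∈ ℝ^{q×r}`, the `n`-th derivative of `M(z) = u(z)w(z)`,
whose `(a,b)` entry is the `n`-th derivative of `z^{a+b}`. -/
def Md (q r n : ℕ) (z : ℝ) : Matrix (Fin q) (Fin r) ℝ :=
  Matrix.of fun a b => iteratedDeriv n (fun t : ℝ => t ^ ((a : ℕ) + (b : ℕ))) z

/-- The block matrix `𝓜(z) ∈ ℝ^{μq×νr}` with `(i,j)` block `M^{(i+j)}(z)`. -/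
def Mcal (q r μ ν : ℕ) (z : ℝ) : Matrix (Fin μ × Fin q) (Fin ν × Fin r) ℝ :=
  Matrix.of fun p p' => Md q r ((p.1 : ℕ) + (p'.1 : ℕ)) z p.2 p'.2

/-- The block matrix `𝓝(z) ∈ ℝ^{μq×νr}` with `(i,j)` block `M^{(i+j)}(z)/(i!·j!)`. -/
def Ncal (q r μ ν : ℕ) (z : ℝ) : Matrix (Fin μ × Fin q) (Fin ν × Fin r) ℝ :=
  Matrix.of fun p p' =>
    Md q r ((p.1 : ℕ) + (p'.1 : ℕ)) z p.2 p'.2 /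
      ((Nat.factorial (p.1 : ℕ) : ℝ) * (Nat.factorial (p'.1 : ℕ) : ℝ))

/-- `𝓝^0(z) = (M(z)/0!, …, M^{(ν−1)}(z)/(ν−1)!) ∈ ℝ^{q×νr}`. -/
def Ncal0 (q r ν : ℕ) (z : ℝ) : Matrix (Fin q) (Fin ν × Fin r) ℝ :=
  Matrix.of fun a p => Md q r (p.1 : ℕ) z a p.2 / (Nat.factorial (p.1 : ℕ) : ℝ)

/-- `𝓜^0(z) = (M(z), M'(z), …, M^{(ν−1)}(z)) ∈ ℝ^{q×νr}`. -/
def M0cal (q r ν : ℕ) (z : ℝ) : Matrix (Fin q) (Fin ν × Fin r) ℝ :=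
  Matrix.of fun a p => Md q r (p.1 : ℕ) z a p.2

/-- `U_q(z)` with columns `u(z), u'(z), …, u^{(q−1)}(z)`, where `u_a(z) = z^a`. -/
def Uq (q : ℕ) (z : ℝ) : Matrix (Fin q) (Fin q) ℝ :=
  Matrix.of fun a j => iteratedDeriv (j : ℕ) (fun t : ℝ => t ^ (a : ℕ)) z

/-- `W_r(z)` with rows `w(z), w'(z), …, w^{(r−1)}(z)`, where `w_b(z) = z^b`. -/
def Wrm (r : ℕ) (z : ℝ) : Matrix (Fin r) (Fin r) ℝ :=
  Matrix.of fun i b => iteratedDeriv (i : ℕ) (fun t : ℝ => t ^ (b : ℕ)) z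

/-- `Ũ_m(z)` with entries `C(i,j)·z^{i−j}` for `i ≥ j` and `0` otherwise. -/
def Ut (m : ℕ) (z : ℝ) : Matrix (Fin m) (Fin m) ℝ :=
  Matrix.of fun i j =>
    if (j : ℕ) ≤ (i : ℕ) then (Nat.choose i j : ℝ) * z ^ ((i : ℕ) - (j : ℕ)) else 0

/-- `W̃_m(z)` with entries `C(j,i)·z^{j−i}` for `j ≥ i` and `0` otherwise. -/
def Wt (m : ℕ) (z : ℝ) : Matrix (Fin m) (Fin m) ℝ :=
  Matrix.of fun i j =>
    if (i : ℕ) ≤ (j : ℕ) then (Nat.choose j i : ℝ) * z ^ ((j : ℕ) - (i : ℕ)) else 0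

/-- `D_m`, the diagonal matrix with `(i,i)` entry `i!`. -/
def Dm (m : ℕ) : Matrix (Fin m) (Fin m) ℝ :=
  Matrix.diagonal fun i => (Nat.factorial (i : ℕ) : ℝ)

/-- The block matrix `Â` whose `(i,j)` block has `(k,l)` entry `C(i+j,i)` if `k+l = i+j`, else 0. -/
def Ahat (q r μ ν : ℕ) : Matrix (Fin μ × Fin q) (Fin ν × Fin r) ℝ :=
  Matrix.of fun p p' =>
    if (p.2 : ℕ) + (p'.2 : ℕ) = (p.1 : ℕ) + (p'.1 : ℕ) then
      (Nat.choose ((p.1 : ℕ) + (p'.1 : ℕ)) (p.1 : ℕ) : ℝ)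
    else 0

/-- `F(z) ∈ ℝ^{r×(r−1)}` with `F_{ii} = −z`, `F_{i+1,i} = 1`, else `0`. -/
def Fm (r : ℕ) (z : ℝ) : Matrix (Fin r) (Fin (r - 1)) ℝ :=
  Matrix.of fun a b =>
    if (a : ℕ) = (b : ℕ) then -z else if (a : ℕ) = (b : ℕ) + 1 then 1 else 0

/-- `F'(z)`, the (constant) derivative of `F(z)`: `−1` on the diagonal, `0` elsewhere. -/
def Fm' (r : ℕ) : Matrix (Fin r) (Fin (r - 1)) ℝ :=
  Matrix.of fun a b => if (a : ℕ) = (b : ℕ) then -1 else 0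

/-- `G(z) ∈ ℝ^{r×r}` with entries `z^{j−i−1}` for `j > i`, else `0`. -/
def Gm (r : ℕ) (z : ℝ) : Matrix (Fin r) (Fin r) ℝ :=
  Matrix.of fun i j => if (i : ℕ) < (j : ℕ) then z ^ ((j : ℕ) - (i : ℕ) - 1) else 0

/-- entrywise `j`-th derivative `G^{(n)}(z)`. -/
def Gd (r n : ℕ) (z : ℝ) : Matrix (Fin r) (Fin r) ℝ :=
  Matrix.of fun i j =>
    iteratedDeriv n (fun t : ℝ => if (i : ℕ) < (j : ℕ) then t ^ ((j : ℕ) - (i : ℕ) - 1) else 0) z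

/-- the row vector `w(z)` with entries `z^b`. -/
def wv (r : ℕ) (z : ℝ) : Fin r → ℝ := fun b => z ^ (b : ℕ)

/-- the `n`-th derivative `w^{(n)}(z)`. -/
def wd (r n : ℕ) (z : ℝ) : Fin r → ℝ := fun b => iteratedDeriv n (fun t : ℝ => t ^ (b : ℕ)) z

/-- the `n`-th derivative `u^{(n)}(z)` of the column vector `u(z)` with entries `z^a`. -/
def ud (q n : ℕ) (z : ℝ) : Fin q → ℝ := fun a => iteratedDeriv n (fun t : ℝ => t ^ (a : ℕ)) z

/-- The matrix `K̄(z)`: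
`[[I_q⊗F(z) + S_q⊗F'(z), −ℓ_q fᵀ ⊗ G(z)], [0, I_{ν−q}⊗I_r − S_{ν−q}⊗G(z)]]`. -/
def Kbar (q r ν : ℕ) (z : ℝ) :
    Matrix (Fin ν × Fin r) ((Fin q × Fin (r - 1)) ⊕ (Fin (ν - q) × Fin r)) ℝ :=
  Matrix.of fun p s =>
    match s with
    | Sum.inl c =>
        (if (p.1 : ℕ) = (c.1 : ℕ) then Fm r z p.2 c.2 else 0) +
        (if (p.1 : ℕ) + 1 = (c.1 : ℕ) then Fm' r p.2 c.2 else 0)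
    | Sum.inr c =>
        (if (p.1 : ℕ) = q + (c.1 : ℕ) then (if p.2 = c.2 then 1 else 0) else 0) +
        (if (p.1 : ℕ) + 1 = q + (c.1 : ℕ) then -(Gm r z p.2 c.2) else 0)

/-- `F_k(z) ∈ ℝ^{(r−k)×(r−1−k)}`. -/
def Fmk (r k : ℕ) (z : ℝ) : Matrix (Fin (r - k)) (Fin (r - (k + 1))) ℝ :=
  Matrix.of fun a b =>
    if (a : ℕ) = (b : ℕ) then -z else if (a : ℕ) = (b : ℕ) + 1 then 1 else 0

/-- `F_k'(z)`, the (constant) derivative of `F_k(z)`. -/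
def Fmk' (r k : ℕ) : Matrix (Fin (r - k)) (Fin (r - (k + 1))) ℝ :=
  Matrix.of fun a b => if (a : ℕ) = (b : ℕ) then -1 else 0

/-- `K_k(z) = I_ν ⊗ F_k(z) + S_ν ⊗ F_k'(z)`. -/
def Kk (ν r k : ℕ) (z : ℝ) :
    Matrix (Fin ν × Fin (r - k)) (Fin ν × Fin (r - (k + 1))) ℝ :=
  (1 : Matrix (Fin ν) (Fin ν) ℝ) ⊗ₖ Fmk r k z + Sh ν ⊗ₖ Fmk' r k

/-- `KP ν r z m = K_0(z) · K_1(z) ⋯ K_{m−1}(z)` (so `KP ν r z μ = 𝒦^{μ−1}(z)`). -/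
def KP (ν r : ℕ) (z : ℝ) : (m : ℕ) → Matrix (Fin ν × Fin r) (Fin ν × Fin (r - m)) ℝ
  | 0 => Matrix.of fun p p' => if p.1 = p'.1 ∧ (p.2 : ℕ) = (p'.2 : ℕ) then 1 else 0
  | m + 1 => KP ν r z m * Kk ν r m z

/-- `𝒜^0 = (A^0, A^1, …, A^{ν−1}) ∈ ℝ^{q×νr}` (at `z = 0`). -/
def A0row (q r ν : ℕ) : Matrix (Fin q) (Fin ν × Fin r) ℝ :=
  Matrix.of fun a p =>
    if (a : ℕ) + (p.2 : ℕ) = (p.1 : ℕ) then (Nat.choose (p.1 : ℕ) (a : ℕ) : ℝ) else 0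

/-- `B^k ∈ ℝ^{r×q}` with entries `(−1)^i·C(q,k+1)` if `i+j = k`, else `0`. -/
def Bk (q r k : ℕ) : Matrix (Fin r) (Fin q) ℝ :=
  Matrix.of fun i j =>
    if (i : ℕ) + (j : ℕ) = k then (-1 : ℝ) ^ (i : ℕ) * (Nat.choose q (k + 1) : ℝ) else 0

/-- `𝓑^0 ∈ ℝ^{νr×q}`, the blocks `B^0, …, B^{ν−1}` stacked vertically. -/
def B0cal (q r ν : ℕ) : Matrix (Fin ν × Fin r) (Fin q) ℝ :=
  Matrix.of fun p j => Bk q r (p.1 : ℕ) p.2 j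

/-- Left multiplication by a fixed matrix, as a linear map. -/
def mulLeftLM {m n p : Type*} [Fintype n] (M : Matrix m n ℝ) :
    Matrix n p ℝ →ₗ[ℝ] Matrix m p ℝ where
  toFun X := M * X
  map_add' X Y := Matrix.mul_add M X Y
  map_smul' c X := by simp [Matrix.mul_smul]

/-- The right inverse `𝓜(z)⁺`. -/
def Mplus (q r μ ν : ℕ) (z : ℝ) : Matrix (Fin ν × Fin r) (Fin μ × Fin q) ℝ :=
  ((1 : Matrix (Fin ν) (Fin ν) ℝ) ⊗ₖ (Wrm r z)⁻¹) * (Lmat ν r 0)⁻¹ *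
    (Abar q r μ ν)ᵀ * (Lmat μ q 0)⁻¹ * ((1 : Matrix (Fin μ) (Fin μ) ℝ) ⊗ₖ (Uq q z)⁻¹)

/-!
The entry of `𝓝^0(z)` in row `a` and column `(i, b)` is `C(a+b, i) z^(a+b-i)`, the coefficient
of `h^i` in `(h + z)^(a+b)`. Vandermonde's convolution factors `𝓝^0(z) = Ũ_q(z) R(z)`, where
`Ũ_q(z)` is unipotent lower triangular and `R(z)` has entry `[h^(i-k)] (h + z)^b` in row `k`.
So `𝓝^0(z)` and `R(z)` have the same kernel. `R(z)` has full row rank `q`, which gives the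
dimension `νr - q`, and its columns with block index `i ≥ q + r - 1` vanish, so only the first
`q + r - 1` blocks of `x` matter. On these blocks `R(z) K̄(z) = 0`, by Pascal's rule on the
first block column of `K̄(z)` and by the hockey-stick identity on the second. Since
`K̄(z)` has full column rank `(q + r - 1) r - q`, its range is the whole kernel of `R(z)`.
-/

open Polynomial

theorem Matrix.mulVec_injective_of_pivots {m n R : Type*} [Fintype n] [CommRing R]
    (A : Matrix m n R) (row : n → m) (level : n → ℕ) (h_pivot : ∀ s, A (row s) s = 1)
    (h_upper : ∀ s t, t ≠ s → A (row s) t ≠ 0 → level s < level t) :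
    Function.Injective A.mulVec := by
  classical
  rw [← Matrix.coe_mulVecLin, ← LinearMap.ker_eq_bot, LinearMap.ker_eq_bot']
  intro c hc
  have hrow (s : n) : c s = -∑ t ∈ Finset.univ.erase s, A (row s) t * c t := by
    have h := congrFun hc (row s)
    rw [Matrix.mulVecLin_apply, Matrix.mulVec, dotProduct, ← Finset.add_sum_erase _ _
      (Finset.mem_univ s), h_pivot, one_mul] at h
    exact eq_neg_of_add_eq_zero_left h
  let N := Finset.univ.sup level + 1
  funext s
  induction s using (measure fun s => N - level s).wf.induction with
  | h s ih =>
    rw [hrow s, Pi.zero_apply, neg_eq_zero]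
    refine Finset.sum_eq_zero fun t ht => ?_
    by_cases hA : A (row s) t = 0
    · rw [hA, zero_mul]
    · have hlt := h_upper s t (Finset.ne_of_mem_erase ht) hA
      have hN : level t < N := Nat.lt_succ_of_le (Finset.le_sup (Finset.mem_univ t))
      rw [ih t (show N - level t < N - level s by omega), Pi.zero_apply, mul_zero]

theorem Matrix.rank_eq_card_of_mulVec_injective {m n K : Type*} [Fintype n] [Field K]
    (A : Matrix m n K) (h : Function.Injective A.mulVec) : A.rank = Fintype.card n := by
  rw [Matrix.rank, LinearMap.finrank_range_of_inj h, Module.finrank_fintype_fun_eq_card]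

theorem Matrix.finrank_ker_mulVecLin {m n K : Type*} [Fintype n] [Field K]
    (A : Matrix m n K) :
    Module.finrank K (LinearMap.ker A.mulVecLin) = Fintype.card n - A.rank := by
  have h := LinearMap.finrank_range_add_finrank_ker A.mulVecLin
  rw [Module.finrank_fintype_fun_eq_card] at h
  rw [Matrix.rank]
  omega

theorem Matrix.range_mulVecLin_eq_ker_of_mul_eq_zero {l m n K : Type*} [Fintype l] [Fintype n]
    [Field K] (A : Matrix m n K) (B : Matrix n l K) (hAB : A * B = 0)
    (hrank : A.rank + B.rank = Fintype.card n) :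
    LinearMap.range B.mulVecLin = LinearMap.ker A.mulVecLin := by
  refine Submodule.eq_of_le_of_finrank_eq ?_ ?_
  · rw [LinearMap.range_le_ker_iff, ← Matrix.mulVecLin_mul, hAB, Matrix.mulVecLin_zero]
  · rw [A.finrank_ker_mulVecLin, ← Matrix.rank]
    omega

theorem Fin.sum_ite_val_eq {M : Type*} [AddCommMonoid M] {m : ℕ} (c : ℕ) (g : Fin m → M) :
    ∑ i : Fin m, (if (i : ℕ) = c then g i else 0) = if h : c < m then g ⟨c, h⟩ else 0 := by
  split_ifs with h
  · rw [Fintype.sum_eq_single ⟨c, h⟩ fun i hi => if_neg fun hic => hi (Fin.ext hic),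
      if_pos rfl]
  · exact Finset.sum_eq_zero fun i _ => if_neg fun hic : (i : ℕ) = c => h (hic ▸ i.isLt)

theorem coeff_X_add_C_pow_eq_zero {R : Type*} [Semiring R] (a : R) {b j : ℕ} (h : b < j) :
    ((X + C a) ^ b).coeff j = 0 := by
  rw [coeff_X_add_C_pow, Nat.choose_eq_zero_of_lt h, Nat.cast_zero, mul_zero]

theorem coeff_X_add_C_pow_succ_succ {R : Type*} [CommSemiring R] (a : R) (b j : ℕ) :
    ((X + C a) ^ (b + 1)).coeff (j + 1) =
      ((X + C a) ^ b).coeff j + a * ((X + C a) ^ b).coeff (j + 1) := by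
  rw [pow_succ, mul_add, coeff_add, coeff_mul_X, coeff_mul_C, mul_comm]

theorem coeff_zero_X_add_C_pow_succ {R : Type*} [CommSemiring R] (a : R) (b : ℕ) :
    ((X + C a) ^ (b + 1)).coeff 0 = a * ((X + C a) ^ b).coeff 0 := by
  rw [pow_succ, mul_add, coeff_add, coeff_mul_X_zero, coeff_mul_C, zero_add, mul_comm]

theorem sum_pow_mul_coeff_X_add_C_pow {R : Type*} [CommRing R] (a : R) (c j : ℕ) :
    ∑ b ∈ Finset.range c, a ^ (c - 1 - b) * ((X + C a) ^ b).coeff j =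
      ((X + C a) ^ c).coeff (j + 1) := by
  have h := congrArg (coeff · (j + 1)) (geom_sum₂_mul (X + C a) (C a) c)
  simp only [add_sub_cancel_right, coeff_mul_X, coeff_sub, ← C_pow, coeff_C_succ, sub_zero,
    finsetSum_coeff, coeff_mul_C] at h
  rw [← h]
  exact Finset.sum_congr rfl fun b _ => mul_comm _ _

theorem Ncal0_apply (q r ν : ℕ) (z : ℝ) (a : Fin q) (p : Fin ν × Fin r) :
    Ncal0 q r ν z a p = ((X + C z) ^ ((a : ℕ) + p.2)).coeff p.1 := by
  have hfac : ((p.1 : ℕ).factorial : ℝ) ≠ 0 := by positivity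
  simp only [Ncal0, Md, Matrix.of_apply, iteratedDeriv_pow, coeff_X_add_C_pow,
    Nat.descFactorial_eq_factorial_mul_choose]
  push_cast
  field_simp

theorem Ut_apply (q : ℕ) (z : ℝ) (a k : Fin q) :
    Ut q z a k = ((X + C z) ^ (a : ℕ)).coeff k := by
  rw [Ut, Matrix.of_apply, coeff_X_add_C_pow]
  split_ifs with h
  · ring
  · rw [Nat.choose_eq_zero_of_lt (not_le.mp h), Nat.cast_zero, mul_zero]

theorem det_Ut (q : ℕ) (z : ℝ) : (Ut q z).det = 1 := by
  rw [Matrix.det_of_isLowerTriangular _ fun a k (h : a < k) => ?_]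
  · exact Finset.prod_eq_one fun a _ => by simp [Ut]
  · rw [Ut, Matrix.of_apply, if_neg (not_le.mpr (Fin.lt_def.mp h))]

def Ncal0Reduced (q r n : ℕ) (z : ℝ) : Matrix (Fin q) (Fin n × Fin r) ℝ :=
  Matrix.of fun k p => if (k : ℕ) ≤ p.1 then ((X + C z) ^ (p.2 : ℕ)).coeff (p.1 - k) else 0

theorem Ncal0_eq_Ut_mul (q r ν : ℕ) (z : ℝ) :
    Ncal0 q r ν z = Ut q z * Ncal0Reduced q r ν z := by
  ext a ⟨i, b⟩
  let g (k : ℕ) : ℝ :=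
    ((X + C z) ^ (a : ℕ)).coeff k * if k ≤ i then ((X + C z) ^ (b : ℕ)).coeff (i - k) else 0
  have hg (k : ℕ) (hk : k ∉ Finset.range (min q (i + 1))) : g k = 0 := by
    rw [Finset.mem_range, lt_min_iff, not_and_or, not_lt, not_lt] at hk
    rcases hk with hk | hk
    · simp [g, coeff_X_add_C_pow, Nat.choose_eq_zero_of_lt (a.isLt.trans_le hk)]
    · simp [g, show ¬ k ≤ i by omega]
  calc Ncal0 q r ν z a (i, b)
      = ∑ k ∈ Finset.range (i + 1), g k := by
        rw [Ncal0_apply, pow_add, coeff_mul, Finset.Nat.sum_antidiagonal_eq_sum_range_succ_mk]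
        exact Finset.sum_congr rfl fun k hk => by
          simp only [g]
          rw [if_pos (Nat.lt_succ_iff.mp (Finset.mem_range.mp hk))]
    _ = ∑ k ∈ Finset.range (min q (i + 1)), g k :=
        (Finset.sum_subset (Finset.range_mono (min_le_right _ _)) fun k _ hk =>
          hg k hk).symm
    _ = ∑ k ∈ Finset.range q, g k :=
        Finset.sum_subset (Finset.range_mono (min_le_left _ _)) fun k _ hk =>
          hg k hk
    _ = (Ut q z * Ncal0Reduced q r ν z) a (i, b) := by
        rw [Matrix.mul_apply, ← Fin.sum_univ_eq_sum_range]
        simp only [g, Ut_apply, Ncal0Reduced, Matrix.of_apply]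

theorem ker_Ncal0_eq_ker_Ncal0Reduced (q r ν : ℕ) (z : ℝ) :
    LinearMap.ker (Ncal0 q r ν z).mulVecLin = LinearMap.ker (Ncal0Reduced q r ν z).mulVecLin := by
  have hUt : Function.Injective (Ut q z).mulVec :=
    Matrix.mulVec_injective_iff_isUnit.mpr <|
      (Matrix.isUnit_iff_isUnit_det _).mpr (by rw [det_Ut]; exact isUnit_one)
  rw [Ncal0_eq_Ut_mul, Matrix.mulVecLin_mul, LinearMap.ker_comp_of_ker_eq_bot]
  exact LinearMap.ker_eq_bot.mpr hUt

theorem rank_Ncal0Reduced (q r n : ℕ) (z : ℝ) (hr : 1 ≤ r) (hn : q + r - 1 ≤ n) :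
    (Ncal0Reduced q r n z).rank = q := by
  let row (k : Fin q) : Fin n × Fin r := (⟨k + r - 1, by omega⟩, ⟨r - 1, by omega⟩)
  have hinj : Function.Injective (Ncal0Reduced q r n z)ᵀ.mulVec := by
    refine Matrix.mulVec_injective_of_pivots _ row (fun k => k) (fun k => ?_) fun k t hne h => ?_
    · simp [row, Ncal0Reduced, coeff_X_add_C_pow, show (k : ℕ) + r - 1 - k = r - 1 by omega]
      omega
    · simp only [Matrix.transpose_apply, Ncal0Reduced, Matrix.of_apply, row] at h
      split_ifs at h with htk
      · by_contra hkt
        exact h (coeff_X_add_C_pow_eq_zero z (by omega))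
      · exact absurd rfl h
  rw [← Matrix.rank_transpose, Matrix.rank_eq_card_of_mulVec_injective _ hinj, Fintype.card_fin]

theorem Ncal0Reduced_mulVec_eq_restrict (q r : ℕ) {μ ν : ℕ} (z : ℝ) (hμ : q + r - 1 ≤ μ)
    (hν : μ ≤ ν) (x : Fin ν × Fin r → ℝ) :
    Ncal0Reduced q r ν z *ᵥ x =
      Ncal0Reduced q r μ z *ᵥ fun p => x (Fin.castLE hν p.1, p.2) := by
  funext k
  refine (Fintype.sum_of_injective (Prod.map (Fin.castLE hν) id)
    ((Fin.castLE_injective hν).prodMap Function.injective_id) _ _ (fun p hp => ?_)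
    fun p => rfl).symm
  have hp1 : μ ≤ p.1 := by
    by_contra! hlt
    exact hp ⟨(⟨p.1, hlt⟩, p.2), rfl⟩
  have hzero : Ncal0Reduced q r ν z k p = 0 := by
    simp only [Ncal0Reduced, Matrix.of_apply]
    split_ifs
    · exact coeff_X_add_C_pow_eq_zero z (by omega)
    · rfl
  exact mul_eq_zero_of_left hzero _

theorem sum_mul_Fm (r : ℕ) (z : ℝ) (ψ : ℕ → ℝ) (c : Fin (r - 1)) :
    ∑ b : Fin r, ψ b * Fm r z b c = ψ (c + 1) - z * ψ c := by
  rw [Fintype.sum_eq_add ⟨c + 1, by omega⟩ ⟨c, by omega⟩ (by simp [Fin.ext_iff])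
    fun b hb => ?_]
  · simp [Fm]
    ring
  · simp only [Fm, Matrix.of_apply, ne_eq, Fin.ext_iff] at hb ⊢
    rw [if_neg (by omega), if_neg (by omega), mul_zero]

theorem sum_mul_Fm' (r : ℕ) (ψ : ℕ → ℝ) (c : Fin (r - 1)) :
    ∑ b : Fin r, ψ b * Fm' r b c = -ψ c := by
  simp only [Fm', Matrix.of_apply, mul_ite, mul_neg, mul_one, mul_zero, Fin.sum_ite_val_eq]
  rw [dif_pos (by omega)]

theorem sum_mul_Gm (r : ℕ) (z : ℝ) (ψ : ℕ → ℝ) (c : Fin r) :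
    ∑ b : Fin r, ψ b * Gm r z b c = ∑ b ∈ Finset.range c, z ^ (c - 1 - b) * ψ b := by
  simp only [Gm, Matrix.of_apply, mul_ite, mul_zero]
  rw [Fin.sum_univ_eq_sum_range (fun b => if b < c then ψ b * z ^ (c - b - 1) else 0),
    ← Finset.sum_subset (Finset.range_mono c.isLt.le) fun b _ hb =>
      if_neg (by simpa using hb)]
  refine Finset.sum_congr rfl fun b hb => ?_
  rw [if_pos (Finset.mem_range.mp hb), Nat.sub_right_comm, mul_comm]

theorem sum_mul_Kbar_inl (q r : ℕ) {μ : ℕ} (z : ℝ) (hμ : q ≤ μ) (φ : ℕ → ℕ → ℝ)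
    (c : Fin q × Fin (r - 1)) :
    ∑ p : Fin μ × Fin r, φ p.1 p.2 * Kbar q r μ z p (.inl c) =
      φ c.1 (c.2 + 1) - z * φ c.1 c.2 - if (c.1 : ℕ) = 0 then 0 else φ (c.1 - 1) c.2 := by
  obtain ⟨⟨_ | d, hd⟩, c2⟩ := c
  · simp [Kbar, Fintype.sum_prod_type, mul_ite, Finset.sum_ite_irrel, Fin.sum_ite_val_eq,
      sum_mul_Fm, show 0 < μ by omega]
  · simp [Kbar, Fintype.sum_prod_type, mul_add, Finset.sum_add_distrib, mul_ite,
      Finset.sum_ite_irrel, Fin.sum_ite_val_eq, sum_mul_Fm, sum_mul_Fm', show d < μ by omega,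
      show d + 1 < μ by omega, sub_eq_add_neg]

theorem sum_mul_Kbar_inr (q r : ℕ) {μ : ℕ} (z : ℝ) (hq : 0 < q) (φ : ℕ → ℕ → ℝ)
    (c : Fin (μ - q) × Fin r) :
    ∑ p : Fin μ × Fin r, φ p.1 p.2 * Kbar q r μ z p (.inr c) =
      φ (q + c.1) c.2 - ∑ b ∈ Finset.range c.2, z ^ (c.2 - 1 - b) * φ (q + c.1 - 1) b := by
  obtain ⟨c1, c2⟩ := c
  obtain ⟨e, he⟩ : ∃ e, q + (c1 : ℕ) = e + 1 := ⟨q + c1 - 1, by omega⟩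
  simp [Kbar, Fintype.sum_prod_type, mul_add, Finset.sum_add_distrib, mul_ite,
    Finset.sum_ite_irrel, Fin.sum_ite_val_eq, sum_mul_Gm, he, show e + 1 < μ by omega,
    show e < μ by omega, sub_eq_add_neg]

theorem Kbar_mulVec_injective (q r : ℕ) {μ : ℕ} (z : ℝ) (hμ : q ≤ μ) :
    Function.Injective (Kbar q r μ z).mulVec := by
  let row : (Fin q × Fin (r - 1)) ⊕ (Fin (μ - q) × Fin r) → Fin μ × Fin r
    | .inl c => (⟨c.1, by omega⟩, ⟨c.2 + 1, by omega⟩)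
    | .inr c => (⟨q + c.1, by omega⟩, c.2)
  -- A pivot is the entry `1` of `F(z)`, resp. of the identity block; every other nonzero entry
  -- of a pivot row lies in a column of higher level.
  let level : (Fin q × Fin (r - 1)) ⊕ (Fin (μ - q) × Fin r) → ℕ
    | .inl c => c.2
    | .inr c => r + c.1
  refine Matrix.mulVec_injective_of_pivots _ row level (fun s => ?_) fun s t hne h => ?_
  · rcases s with ⟨c1, c2⟩ | ⟨c1, c2⟩ <;> simp [row, Kbar, Fm]
  · rcases s with ⟨c1, c2⟩ | ⟨c1, c2⟩ <;> rcases t with ⟨d1, d2⟩ | ⟨d1, d2⟩ <;>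
      simp only [level] <;> simp [row, Kbar, Fm, Fm', Fin.ext_iff] at h hne <;>
      split_ifs at h <;> first | omega | simp at h

theorem Ncal0Reduced_mul_Kbar (q r : ℕ) {μ : ℕ} (z : ℝ) (hμ : q ≤ μ) :
    Ncal0Reduced q r μ z * Kbar q r μ z = 0 := by
  ext k s
  let φ (i b : ℕ) : ℝ := if (k : ℕ) ≤ i then ((X + C z) ^ b).coeff (i - k) else 0
  change ∑ p : Fin μ × Fin r, φ p.1 p.2 * Kbar q r μ z p s = 0
  rcases s with ⟨⟨c1, hc1⟩, c2⟩ | ⟨c1, c2⟩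
  · rw [sum_mul_Kbar_inl q r z hμ]
    rcases lt_or_ge c1 k with hlt | hle
    · simp [φ, show ¬ (k : ℕ) ≤ c1 by omega, show ¬ (k : ℕ) ≤ c1 - 1 by omega]
    · obtain ⟨_ | j, rfl⟩ := Nat.exists_eq_add_of_le hle
      · simp [φ, coeff_zero_X_add_C_pow_succ]
        omega
      · simp [φ, show (k : ℕ) + (j + 1) - 1 = k + j by omega, coeff_X_add_C_pow_succ_succ]
  · rw [sum_mul_Kbar_inr q r z k.pos]
    obtain ⟨j, hj⟩ : ∃ j, q + (c1 : ℕ) - k = j + 1 := ⟨q + c1 - k - 1, by omega⟩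
    simp only [φ, if_pos (show (k : ℕ) ≤ q + c1 by omega),
      if_pos (show (k : ℕ) ≤ q + c1 - 1 by omega), hj, show q + (c1 : ℕ) - 1 - k = j by omega,
      sum_pow_mul_coeff_X_add_C_pow, sub_self]

theorem range_Kbar_eq_ker_Ncal0Reduced (q r : ℕ) (z : ℝ) (hr : 1 ≤ r) :
    LinearMap.range (Kbar q r (q + r - 1) z).mulVecLin =
      LinearMap.ker (Ncal0Reduced q r (q + r - 1) z).mulVecLin := by
  refine Matrix.range_mulVecLin_eq_ker_of_mul_eq_zero _ _
    (Ncal0Reduced_mul_Kbar q r z (by omega)) ?_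
  rw [rank_Ncal0Reduced q r _ z hr le_rfl,
    Matrix.rank_eq_card_of_mulVec_injective _ (Kbar_mulVec_injective q r z (by omega))]
  obtain ⟨s, rfl⟩ : ∃ s, r = s + 1 := ⟨r - 1, by omega⟩
  simp only [Fintype.card_sum, Fintype.card_prod, Fintype.card_fin,
    show q + (s + 1) - 1 = q + s by omega, Nat.add_sub_cancel, Nat.add_sub_cancel_left]
  ring

theorem statement13 (q r ν : ℕ) (hr : 2 ≤ r) (hν : q + r ≤ ν) :
    ∀ z : ℝ,
      Module.finrank ℝ (LinearMap.ker (Ncal0 q r ν z).mulVecLin) = ν * r - q ∧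
      (∀ x : Fin ν × Fin r → ℝ,
        (Ncal0 q r ν z).mulVec x = 0 ↔
          (fun p : Fin (q + r - 1) × Fin r =>
              x (Fin.castLE (by omega) p.1, p.2)) ∈
            LinearMap.range (Kbar q r (q + r - 1) z).mulVecLin) := by
  intro z
  have hker := ker_Ncal0_eq_ker_Ncal0Reduced q r ν z
  refine ⟨?_, fun x => ?_⟩
  · rw [hker, Matrix.finrank_ker_mulVecLin, rank_Ncal0Reduced q r ν z (by omega) (by omega),
      Fintype.card_prod, Fintype.card_fin, Fintype.card_fin]
  · rw [← Matrix.mulVecLin_apply, ← LinearMap.mem_ker, hker, LinearMap.mem_ker,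
      Matrix.mulVecLin_apply, Ncal0Reduced_mulVec_eq_restrict q r z le_rfl (by omega),
      range_Kbar_eq_ker_Ncal0Reduced q r z (by omega)]
    rfl
end
end

section
/- Assume ν ≤ q. For 0 ≤ k ≤ r−2 let F_k(z) ∈ ℝ^{(r−k)×(r−1−k)} have entries (F_k)_{ii}(z) = −z and (F_k)_{i+1,i}(z) = 1 and 0 otherwise, and set K_k(z) = I_ν⊗F_k(z) + S_ν⊗F_k'(z) ∈ ℝ^{ν(r−k)×ν(r−1−k)}. If μ ≤ r−1, let 𝒦^{μ−1}(z) = K_0(z)·K_1(z)⋯K_{μ−1}(z) ∈ ℝ^{νr×ν(r−μ)}. Then, for every z ∈ ℝ: if μ ≤ r−1 the kernel of 𝓝(z) is spanned by the columns of 𝒦^{μ−1}(z) and has dimension ν(r−μ), while if μ ≥ r the kernel of 𝓝(z) is {0}. In all cases rank 𝓝(z) = ν·min{μ,r}; in particular 𝓝(z) has full column rank if and only if μ ≥ r. -/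
open Matrix Kronecker

noncomputable section

/-!
Read `x ∈ ℝ^{ν×r}` as the polynomials `P_j = ∑_b x_{j,b} X^b` (`j < ν`) and put
`g_l = ∑_i D^{(i)} P_{l+i}`, where `D^{(i)}` is the `i`-th Hasse derivative. By Leibniz' rule the
`(i,a)` entry of `𝓝(z) x` is `D^{(i)}(∑_l D^{(l)}(X^a) g_l)` evaluated at `z`, and since `ν ≤ q` the
polynomials `∑_l D^{(l)}(X^a) g_l`, `a < q`, are unitriangular combinations of the `g_l`; hence
`x ∈ ker 𝓝(z)` iff `(X - z)^μ` divides every `g_l`. The matrix `K_k(z)` acts as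
`P_j ↦ (X - z) P_j - P_{j+1}`, which multiplies every `g_l` by `X - z`, so `𝒦^{μ-1}(z)` is
injective with range inside the kernel. Conversely, the Taylor coefficients of the `g_l` at `z` of
orders `μ, …, r - 1` determine an element of the kernel, so its dimension is at most `ν(r - μ)`,
the dimension of that range.
-/

open Finset Polynomial

namespace Polynomial

variable {R : Type*} [CommRing R]

theorem X_sub_C_pow_dvd_iff_eval_hasseDeriv {z : R} {n : ℕ} {f : R[X]} :
    (X - C z) ^ n ∣ f ↔ ∀ i < n, (hasseDeriv i f).eval z = 0 := by
  simp only [X_sub_C_pow_dvd_iff, ← taylor_apply, X_pow_dvd_iff, taylor_coeff]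

theorem hasseDeriv_succ_X_sub_C_mul (z : R) (i : ℕ) (f : R[X]) :
    hasseDeriv (i + 1) ((X - C z) * f) = (X - C z) * hasseDeriv (i + 1) f + hasseDeriv i f := by
  rw [hasseDeriv_mul, Nat.sum_antidiagonal_succ, Nat.sum_antidiagonal_eq_sum_range_succ
    (fun a b => hasseDeriv (a + 1) (X - C z) * hasseDeriv b f), sum_range_succ']
  have hX : ∀ k, hasseDeriv (k + 2) (X - C z : R[X]) = 0 := fun k => by
    rw [map_sub, hasseDeriv_X _ (by omega), hasseDeriv_C _ _ (by omega), sub_zero]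
  simp [hX]

def hasseSum (ν : ℕ) : (ℕ → R[X]) →ₗ[R] ℕ → R[X] :=
  LinearMap.pi fun l => ∑ i ∈ range (ν - l), hasseDeriv i ∘ₗ LinearMap.proj (l + i)

theorem hasseSum_apply (ν : ℕ) (p : ℕ → R[X]) (l : ℕ) :
    hasseSum ν p l = ∑ i ∈ range (ν - l), hasseDeriv i (p (l + i)) := by
  simp [hasseSum]

theorem hasseDeriv_mem_degreeLT {d : ℕ} {f : R[X]} (hf : f ∈ degreeLT R d) (k : ℕ) :
    hasseDeriv k f ∈ degreeLT R d := by
  rw [mem_degreeLT, degree_lt_iff_coeff_zero] at hf ⊢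
  intro m hm
  rw [hasseDeriv_coeff, hf _ (by omega), mul_zero]

theorem hasseSum_mem_degreeLT (ν : ℕ) {d : ℕ} {p : ℕ → R[X]} (hp : ∀ j, p j ∈ degreeLT R d)
    (l : ℕ) : hasseSum ν p l ∈ degreeLT R d := by
  rw [hasseSum_apply]
  exact Submodule.sum_mem _ fun i _ => hasseDeriv_mem_degreeLT (hp _) i

theorem hasseSum_X_sub_C_mul_sub_shift {ν : ℕ} (z : R) {p : ℕ → R[X]} (hp : p ν = 0) (l : ℕ) :
    hasseSum ν (fun j => (X - C z) * p j - p (j + 1)) l = (X - C z) * hasseSum ν p l := by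
  simp only [hasseSum_apply, map_sub, sum_sub_distrib, mul_sum]
  obtain h | ⟨n, hn⟩ : ν - l = 0 ∨ ∃ n, ν - l = n + 1 := by
    rcases ν - l with _ | n <;> simp
  · simp [h]
  have hν : l + (n + 1) = ν := by omega
  rw [hn, sum_range_succ' (fun i => hasseDeriv i ((X - C z) * p (l + i))),
    sum_range_succ (fun i => hasseDeriv i (p (l + i + 1))), add_assoc l n 1, hν, hp, map_zero,
    add_zero, sum_range_succ']
  simp only [hasseDeriv_succ_X_sub_C_mul, sum_add_distrib, hasseDeriv_zero', add_assoc]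
  abel

theorem sum_hasseDeriv_mul (ν : ℕ) (f : R[X]) (p : ℕ → R[X]) :
    ∑ j ∈ range ν, hasseDeriv j (f * p j) = ∑ l ∈ range ν, hasseDeriv l f * hasseSum ν p l := by
  set F : ℕ → ℕ → R[X] := fun a b => hasseDeriv a f * hasseDeriv b (p (a + b))
  calc ∑ j ∈ range ν, hasseDeriv j (f * p j)
      = ∑ j ∈ range ν, ∑ ij ∈ antidiagonal j, F ij.1 ij.2 := by
        refine sum_congr rfl fun j _ => ?_
        rw [hasseDeriv_mul]
        exact sum_congr rfl fun ij hij => by simp only [F, mem_antidiagonal.1 hij]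
    _ = ∑ j ∈ range ν, ∑ k ∈ range (j + 1), F k (j - k) :=
        sum_congr rfl fun j _ => Nat.sum_antidiagonal_eq_sum_range_succ F j
    _ = ∑ l ∈ range ν, hasseDeriv l f * hasseSum ν p l := by
        rw [sum_range_diag_flip]
        simp only [F, hasseSum_apply, mul_sum]

theorem eq_zero_of_hasseSum_eq_zero {ν : ℕ} {p : ℕ → R[X]} (hp : ∀ j, ν ≤ j → p j = 0)
    (h : ∀ l < ν, hasseSum ν p l = 0) : p = 0 := by
  suffices ∀ l, p l = 0 from _root_.funext this
  intro l
  induction hl : ν - l using Nat.strong_induction_on generalizing l with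
  | _ n ih =>
  rcases n with _ | n
  · exact hp l (by omega)
  have hsum := h l (by omega)
  rw [hasseSum_apply, hl, sum_range_succ'] at hsum
  rw [sum_eq_zero fun i hi => by
    rw [ih (n - i) (by omega) (l + (i + 1)) (by simp at hi; omega), map_zero]] at hsum
  simpa using hsum

theorem dvd_of_forall_dvd_sum_hasseDeriv_X_pow_mul {ν : ℕ} {d : R[X]} {p : ℕ → R[X]}
    (h : ∀ a < ν, d ∣ ∑ l ∈ range ν, hasseDeriv l (X ^ a) * p l) : ∀ l < ν, d ∣ p l := by
  intro a
  induction a using Nat.strong_induction_on with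
  | _ a ih =>
  intro ha
  have hsplit : ∑ l ∈ range ν, hasseDeriv l (X ^ a) * p l
      = ∑ l ∈ range a, hasseDeriv l (X ^ a) * p l + p a := by
    rw [← sum_subset (range_subset_range.2 (show a + 1 ≤ ν by omega)), sum_range_succ]
    · simp [X_pow_eq_monomial, hasseDeriv_monomial]
    · intro l _ hl
      simp [X_pow_eq_monomial, hasseDeriv_monomial,
        Nat.choose_eq_zero_of_lt (show a < l by simp at hl; omega)]
  have := dvd_sub (h a ha) (dvd_sum fun l hl =>
    (ih l (mem_range.1 hl) (by simp at hl; omega)).mul_left (hasseDeriv l (X ^ a)))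
  rwa [hsplit, add_sub_cancel_left] at this

theorem eq_zero_of_X_sub_C_pow_dvd_of_taylor_coeff {z : R} {μ d : ℕ} {f : R[X]}
    (hdvd : (X - C z) ^ μ ∣ f) (hf : f ∈ degreeLT R d)
    (htaylor : ∀ t < d - μ, (taylor z f).coeff (μ + t) = 0) : f = 0 := by
  rw [← taylor_eq_zero (r := z)]
  ext m
  rw [coeff_zero]
  by_cases hm : m < μ
  · rw [taylor_coeff]
    exact X_sub_C_pow_dvd_iff_eval_hasseDeriv.1 hdvd m hm
  by_cases hmd : m < d
  · simpa [show μ + (m - μ) = m by omega] using htaylor (m - μ) (by omega)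
  · rw [mem_degreeLT, ← degree_taylor _ z, degree_lt_iff_coeff_zero] at hf
    exact hf m (by omega)

end Polynomial

section RowPoly

variable {R : Type*} [CommRing R]

/-- Block `j` of `x` read as the polynomial `∑_b x_{j,b} X^b`; indexing blocks by `ℕ`, with zero
from `ν` on, lets `K_k(z)` be written as `P_j ↦ (X - z) P_j - P_{j+1}` without bound checks. -/
def rowPoly (ν d : ℕ) : (Fin ν × Fin d → R) →ₗ[R] ℕ → R[X] :=
  Fintype.linearCombination R fun c j => if (c.1 : ℕ) = j then X ^ (c.2 : ℕ) else 0

theorem rowPoly_apply {ν d : ℕ} (x : Fin ν × Fin d → R) (j : ℕ) :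
    rowPoly ν d x j = ∑ c, x c • if (c.1 : ℕ) = j then (X : R[X]) ^ (c.2 : ℕ) else 0 := by
  simp [rowPoly, Fintype.linearCombination_apply]

theorem rowPoly_of_le {ν d : ℕ} (x : Fin ν × Fin d → R) {j : ℕ} (hj : ν ≤ j) :
    rowPoly ν d x j = 0 := by
  rw [rowPoly_apply]
  exact sum_eq_zero fun c _ => by rw [if_neg (by omega), smul_zero]

theorem coeff_rowPoly {ν d : ℕ} (x : Fin ν × Fin d → R) (j : Fin ν) (b : Fin d) :
    (rowPoly ν d x j).coeff b = x (j, b) := by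
  rw [rowPoly_apply, finsetSum_coeff, sum_eq_single (j, b)]
  · simp
  · rintro ⟨j', b'⟩ _ hne
    simp only [coeff_smul, smul_eq_mul]
    split_ifs with h
    · rw [coeff_X_pow, if_neg, mul_zero]
      intro hb; exact hne (by ext <;> simp_all [Fin.ext_iff])
    · simp
  · simp

theorem rowPoly_injective (ν d : ℕ) : Function.Injective (rowPoly (R := R) ν d) := by
  intro x y h
  funext c
  rw [← coeff_rowPoly x, ← coeff_rowPoly y, h]

theorem rowPoly_mem_degreeLT {ν d : ℕ} (x : Fin ν × Fin d → R) (j : ℕ) :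
    rowPoly ν d x j ∈ degreeLT R d := by
  rw [rowPoly_apply]
  refine Submodule.sum_mem _ fun c _ => Submodule.smul_mem _ _ ?_
  split_ifs
  · exact mem_degreeLT.2 ((degree_X_pow_le _).trans_lt (by exact_mod_cast c.2.isLt))
  · exact Submodule.zero_mem _

theorem rowPoly_mulVec {ν d : ℕ} {n : Type*} [Fintype n] (A : Matrix (Fin ν × Fin d) n R)
    (y : n → R) (j : ℕ) :
    rowPoly ν d (A *ᵥ y) j = ∑ c', y c' • rowPoly ν d (fun c => A c c') j := by
  simp only [rowPoly_apply, Matrix.mulVec, dotProduct, sum_smul, smul_sum, smul_smul]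
  rw [sum_comm]
  simp only [mul_comm]

theorem rowPoly_kronecker_col {ν ν' d d' : ℕ} (A : Matrix (Fin ν) (Fin ν') R)
    (B : Matrix (Fin d) (Fin d') R) (c' : Fin ν' × Fin d') (j : ℕ) :
    rowPoly ν d (fun c => (A ⊗ₖ B) c c') j
      = (if h : j < ν then A ⟨j, h⟩ c'.1 else 0) • ∑ a, B a c'.2 • (X : R[X]) ^ (a : ℕ) := by
  rw [rowPoly_apply, Fintype.sum_prod_type]
  split_ifs with h
  · rw [sum_eq_single ⟨j, h⟩]
    · simp [smul_sum, smul_smul]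
    · intro j' _ hj'
      exact sum_eq_zero fun a _ => by rw [if_neg (fun h' => hj' (Fin.ext h')), smul_zero]
    · simp
  · rw [zero_smul]
    exact sum_eq_zero fun j' _ => sum_eq_zero fun a _ => by
      rw [if_neg (show (j' : ℕ) ≠ j by omega), smul_zero]

def hasseRowPoly (ν d : ℕ) : (Fin ν × Fin d → R) →ₗ[R] ℕ → R[X] :=
  hasseSum ν ∘ₗ rowPoly ν d

theorem hasseRowPoly_mem_degreeLT {ν d : ℕ} (x : Fin ν × Fin d → R) (l : ℕ) :
    hasseRowPoly ν d x l ∈ degreeLT R d :=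
  hasseSum_mem_degreeLT ν (rowPoly_mem_degreeLT x) l

theorem eq_zero_of_hasseRowPoly_eq_zero {ν d : ℕ} {x : Fin ν × Fin d → R}
    (h : ∀ l < ν, hasseRowPoly ν d x l = 0) : x = 0 :=
  rowPoly_injective ν d <| by
    rw [map_zero]
    exact eq_zero_of_hasseSum_eq_zero (fun j hj => rowPoly_of_le x hj) h

theorem hasseRowPoly_injective (ν d : ℕ) : Function.Injective (hasseRowPoly (R := R) ν d) :=
  (injective_iff_map_eq_zero _).2 fun _ h =>
    eq_zero_of_hasseRowPoly_eq_zero fun l _ => by rw [h, Pi.zero_apply]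

end RowPoly

theorem sum_Fmk_smul_X_pow (r k : ℕ) (z : ℝ) (b : Fin (r - (k + 1))) :
    ∑ a, Fmk r k z a b • (X : ℝ[X]) ^ (a : ℕ) = (X - C z) * X ^ (b : ℕ) := by
  have hsplit : ∀ a : Fin (r - k), Fmk r k z a b • (X : ℝ[X]) ^ (a : ℕ)
      = (if (a : ℕ) = b then -z • X ^ (a : ℕ) else 0)
        + (if (a : ℕ) = b + 1 then X ^ (a : ℕ) else 0) := by
    intro a
    simp only [Fmk, Matrix.of_apply]
    split_ifs <;> first | omega | simp
  simp only [hsplit, sum_add_distrib]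
  rw [Fin.sum_univ_eq_sum_range (fun a => if a = b then -z • (X : ℝ[X]) ^ a else 0),
    Fin.sum_univ_eq_sum_range (fun a => if a = b + 1 then (X : ℝ[X]) ^ a else 0),
    sum_ite_eq', sum_ite_eq', if_pos (mem_range.2 (by omega)), if_pos (mem_range.2 (by omega)),
    smul_eq_C_mul, C_neg]
  ring

theorem sum_Fmk'_smul_X_pow (r k : ℕ) (b : Fin (r - (k + 1))) :
    ∑ a, Fmk' r k a b • (X : ℝ[X]) ^ (a : ℕ) = -X ^ (b : ℕ) := by
  have h : ∀ a : Fin (r - k), Fmk' r k a b • (X : ℝ[X]) ^ (a : ℕ)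
      = if (a : ℕ) = b then -X ^ (a : ℕ) else 0 := by
    intro a
    simp only [Fmk', Matrix.of_apply]
    split_ifs <;> simp
  simp only [h]
  rw [Fin.sum_univ_eq_sum_range (fun a => if a = b then -(X : ℝ[X]) ^ a else 0), sum_ite_eq',
    if_pos (mem_range.2 (by omega))]

theorem dite_one_apply {R : Type*} [Zero R] [One R] {ν : ℕ} (j : ℕ) (c : Fin ν) :
    (if h : j < ν then (1 : Matrix (Fin ν) (Fin ν) R) ⟨j, h⟩ c else 0)
      = if (c : ℕ) = j then 1 else 0 := by
  split_ifs <;>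
    first | exact absurd c.isLt (by omega) | simp_all [Matrix.one_apply, Fin.ext_iff, eq_comm]

theorem dite_Sh_apply {ν : ℕ} (j : ℕ) (c : Fin ν) :
    (if h : j < ν then Sh ν ⟨j, h⟩ c else 0) = if (c : ℕ) = j + 1 then 1 else 0 := by
  split_ifs <;> first | exact absurd c.isLt (by omega) | simp_all [Sh, eq_comm]

theorem rowPoly_Kk_col (ν r k : ℕ) (z : ℝ) (c' : Fin ν × Fin (r - (k + 1))) (j : ℕ) :
    rowPoly ν (r - k) (fun c => Kk ν r k z c c') j
      = (if (c'.1 : ℕ) = j then (X - C z) * X ^ (c'.2 : ℕ) else 0)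
        - if (c'.1 : ℕ) = j + 1 then X ^ (c'.2 : ℕ) else 0 := by
  have hsum : (fun c => Kk ν r k z c c')
      = (fun c => (1 ⊗ₖ Fmk r k z) c c') + fun c => (Sh ν ⊗ₖ Fmk' r k) c c' := rfl
  rw [hsum, map_add, Pi.add_apply, rowPoly_kronecker_col, rowPoly_kronecker_col,
    sum_Fmk_smul_X_pow, sum_Fmk'_smul_X_pow, dite_one_apply, dite_Sh_apply, ite_smul, ite_smul,
    one_smul, zero_smul, one_smul, zero_smul]
  split_ifs <;> ring

theorem rowPoly_Kk_mulVec (ν r k : ℕ) (z : ℝ) (y : Fin ν × Fin (r - (k + 1)) → ℝ) (j : ℕ) :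
    rowPoly ν (r - k) (Kk ν r k z *ᵥ y) j
      = (X - C z) * rowPoly ν (r - (k + 1)) y j - rowPoly ν (r - (k + 1)) y (j + 1) := by
  simp only [rowPoly_mulVec, rowPoly_Kk_col]
  simp only [rowPoly_apply, mul_sum, ← sum_sub_distrib, smul_sub,
    mul_smul_comm, mul_ite, mul_zero]

theorem hasseRowPoly_Kk_mulVec (ν r k : ℕ) (z : ℝ) (y : Fin ν × Fin (r - (k + 1)) → ℝ) (l : ℕ) :
    hasseRowPoly ν (r - k) (Kk ν r k z *ᵥ y) l = (X - C z) * hasseRowPoly ν (r - (k + 1)) y l := by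
  simp only [hasseRowPoly, LinearMap.comp_apply]
  rw [show rowPoly ν (r - k) (Kk ν r k z *ᵥ y) = _ from funext (rowPoly_Kk_mulVec ν r k z y)]
  exact hasseSum_X_sub_C_mul_sub_shift z (rowPoly_of_le y le_rfl) l

theorem KP_zero_mulVec (ν r : ℕ) (z : ℝ) (y : Fin ν × Fin (r - 0) → ℝ) : KP ν r z 0 *ᵥ y = y := by
  have h1 : KP ν r z 0 = (1 : Matrix (Fin ν × Fin r) (Fin ν × Fin r) ℝ) := by
    ext p p'
    simp [KP, Matrix.one_apply, Prod.ext_iff, Fin.ext_iff]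
  rw [h1, Matrix.one_mulVec]

theorem hasseRowPoly_KP_mulVec (ν r : ℕ) (z : ℝ) (m : ℕ) (y : Fin ν × Fin (r - m) → ℝ) (l : ℕ) :
    hasseRowPoly ν r (KP ν r z m *ᵥ y) l = (X - C z) ^ m * hasseRowPoly ν (r - m) y l := by
  induction m with
  | zero => rw [KP_zero_mulVec, pow_zero, one_mul]; rfl
  | succ m ih =>
    rw [KP, ← Matrix.mulVec_mulVec, ih, hasseRowPoly_Kk_mulVec, pow_succ, mul_assoc]

theorem KP_mulVec_injective (ν r : ℕ) (z : ℝ) (m : ℕ) :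
    Function.Injective (KP ν r z m *ᵥ ·) := by
  intro y y' h
  apply hasseRowPoly_injective ν (r - m)
  funext l
  have hl := congrArg (hasseRowPoly ν r · l) h
  simp only [hasseRowPoly_KP_mulVec] at hl
  exact mul_left_cancel₀ (pow_ne_zero m (X_sub_C_ne_zero z)) hl

theorem iteratedDeriv_pow_eq_factorial_mul_eval_hasseDeriv (k m : ℕ) (z : ℝ) :
    iteratedDeriv k (fun t : ℝ => t ^ m) z
      = k.factorial * (hasseDeriv k (X ^ m : ℝ[X])).eval z := by
  rw [iteratedDeriv_pow, Nat.descFactorial_eq_factorial_mul_choose]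
  simp [X_pow_eq_monomial, hasseDeriv_monomial, mul_assoc]

theorem Ncal_apply (q r μ ν : ℕ) (z : ℝ) (i : Fin μ) (a : Fin q) (j : Fin ν) (b : Fin r) :
    Ncal q r μ ν z (i, a) (j, b)
      = (hasseDeriv i (hasseDeriv j (X ^ (a : ℕ) * X ^ (b : ℕ) : ℝ[X]))).eval z := by
  rw [← LinearMap.comp_apply, hasseDeriv_comp, ← pow_add, LinearMap.smul_apply, eval_smul,
    nsmul_eq_mul, Nat.choose_symm_add]
  simp only [Ncal, Md, Matrix.of_apply, iteratedDeriv_pow_eq_factorial_mul_eval_hasseDeriv,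
    ← Nat.add_choose_mul_factorial_mul_factorial]
  push_cast
  field_simp

theorem sum_hasseDeriv_mul_rowPoly {ν d : ℕ} (f : ℝ[X]) (x : Fin ν × Fin d → ℝ) :
    ∑ j ∈ range ν, hasseDeriv j (f * rowPoly ν d x j)
      = ∑ c, x c • hasseDeriv c.1 (f * X ^ (c.2 : ℕ)) := by
  simp only [rowPoly_apply, mul_sum, map_sum]
  rw [sum_comm]
  refine sum_congr rfl fun c _ => ?_
  simp only [mul_smul_comm, map_smul, mul_zero, apply_ite, map_zero, smul_zero]
  rw [sum_ite_eq, if_pos (mem_range.2 c.1.isLt)]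

theorem Ncal_mulVec_apply (q r μ ν : ℕ) (z : ℝ) (x : Fin ν × Fin r → ℝ) (i : Fin μ) (a : Fin q) :
    (Ncal q r μ ν z *ᵥ x) (i, a)
      = (hasseDeriv i
          (∑ l ∈ range ν, hasseDeriv l (X ^ (a : ℕ)) * hasseRowPoly ν r x l)).eval z := by
  rw [hasseRowPoly]
  simp only [LinearMap.comp_apply]
  rw [← sum_hasseDeriv_mul, sum_hasseDeriv_mul_rowPoly, map_sum, eval_finsetSum,
    Matrix.mulVec, dotProduct]
  refine sum_congr rfl fun c _ => ?_
  rw [Ncal_apply, map_smul, eval_smul, smul_eq_mul, mul_comm]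

theorem Ncal_mulVec_eq_zero_iff {q r μ ν : ℕ} (z : ℝ) (hνq : ν ≤ q) (x : Fin ν × Fin r → ℝ) :
    Ncal q r μ ν z *ᵥ x = 0 ↔ ∀ l < ν, (X - C z) ^ μ ∣ hasseRowPoly ν r x l := by
  have hcols : Ncal q r μ ν z *ᵥ x = 0 ↔ ∀ a < q,
      (X - C z) ^ μ ∣ ∑ l ∈ range ν, hasseDeriv l (X ^ a) * hasseRowPoly ν r x l := by
    simp only [funext_iff, Prod.forall, Pi.zero_apply, Ncal_mulVec_apply,
      X_sub_C_pow_dvd_iff_eval_hasseDeriv, Fin.forall_iff]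
    exact ⟨fun h a ha i hi => h i hi a ha, fun h i hi a ha => h a ha i hi⟩
  rw [hcols]
  refine ⟨fun h => dvd_of_forall_dvd_sum_hasseDeriv_X_pow_mul fun a ha => h a (by omega),
    fun h a _ => dvd_sum fun l hl => (h l (mem_range.1 hl)).mul_left _⟩

theorem finrank_range_KP (ν r : ℕ) (z : ℝ) (m : ℕ) :
    Module.finrank ℝ (LinearMap.range (KP ν r z m).mulVecLin) = ν * (r - m) := by
  rw [LinearMap.finrank_range_of_inj (KP_mulVec_injective ν r z m)]
  simp

theorem range_KP_le_ker_Ncal (q r μ ν : ℕ) (z : ℝ) (hνq : ν ≤ q) :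
    LinearMap.range (KP ν r z μ).mulVecLin ≤ LinearMap.ker (Ncal q r μ ν z).mulVecLin := by
  rintro _ ⟨y, rfl⟩
  rw [LinearMap.mem_ker, Matrix.mulVecLin_apply, Matrix.mulVecLin_apply,
    Ncal_mulVec_eq_zero_iff z hνq]
  intro l _
  rw [hasseRowPoly_KP_mulVec]
  exact dvd_mul_right _ _

theorem finrank_ker_Ncal_le (q r μ ν : ℕ) (z : ℝ) (hνq : ν ≤ q) :
    Module.finrank ℝ (LinearMap.ker (Ncal q r μ ν z).mulVecLin) ≤ ν * (r - μ) := by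
  let ρ : (Fin ν × Fin r → ℝ) →ₗ[ℝ] Fin ν × Fin (r - μ) → ℝ := LinearMap.pi fun c =>
    lcoeff ℝ (μ + c.2) ∘ₗ (taylor z : ℝ[X] →ₗ[ℝ] ℝ[X]) ∘ₗ LinearMap.proj (c.1 : ℕ) ∘ₗ
      hasseRowPoly ν r
  have hρ : Function.Injective (ρ.domRestrict (LinearMap.ker (Ncal q r μ ν z).mulVecLin)) := by
    refine (injective_iff_map_eq_zero _).2 fun ⟨x, hx⟩ hρx => ?_
    have hdvd := (Ncal_mulVec_eq_zero_iff z hνq x).1 hx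
    refine Subtype.ext (eq_zero_of_hasseRowPoly_eq_zero fun l hl => ?_)
    refine eq_zero_of_X_sub_C_pow_dvd_of_taylor_coeff (hdvd l hl)
      (hasseRowPoly_mem_degreeLT x l) fun t ht => ?_
    exact congrFun hρx (⟨l, hl⟩, ⟨t, ht⟩)
  simpa using LinearMap.finrank_le_finrank_of_injective hρ

theorem range_KP_eq_ker_Ncal (q r μ ν : ℕ) (z : ℝ) (hνq : ν ≤ q) :
    LinearMap.range (KP ν r z μ).mulVecLin = LinearMap.ker (Ncal q r μ ν z).mulVecLin :=
  Submodule.eq_of_le_of_finrank_le (range_KP_le_ker_Ncal q r μ ν z hνq)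
    (by rw [finrank_range_KP]; exact finrank_ker_Ncal_le q r μ ν z hνq)

/-- For `r ≤ μ` the truncated `r - μ` is `0`: the kernel is trivial. -/
theorem finrank_ker_Ncal (q r μ ν : ℕ) (z : ℝ) (hνq : ν ≤ q) :
    Module.finrank ℝ (LinearMap.ker (Ncal q r μ ν z).mulVecLin) = ν * (r - μ) := by
  rw [← range_KP_eq_ker_Ncal q r μ ν z hνq, finrank_range_KP]

theorem statement14_general (q r μ ν : ℕ) (hν : 0 < ν)
    (hνq : ν ≤ q) :
    ∀ z : ℝ,
      (μ ≤ r - 1 →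
        LinearMap.range (KP ν r z μ).mulVecLin = LinearMap.ker (Ncal q r μ ν z).mulVecLin ∧
        Module.finrank ℝ (LinearMap.ker (Ncal q r μ ν z).mulVecLin) = ν * (r - μ)) ∧
      (r ≤ μ → LinearMap.ker (Ncal q r μ ν z).mulVecLin = ⊥) ∧
      (Ncal q r μ ν z).rank = ν * min μ r ∧
      (Function.Injective (Ncal q r μ ν z).mulVecLin ↔ r ≤ μ) := by
  intro z
  have hker := finrank_ker_Ncal q r μ ν z hνq
  have hker_bot : LinearMap.ker (Ncal q r μ ν z).mulVecLin = ⊥ ↔ r ≤ μ := by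
    rw [← Submodule.finrank_eq_zero, hker, Nat.mul_eq_zero]
    omega
  refine ⟨fun _ => ⟨range_KP_eq_ker_Ncal q r μ ν z hνq, hker⟩, hker_bot.2, ?_,
    LinearMap.ker_eq_bot.symm.trans hker_bot⟩
  have hrank := LinearMap.finrank_range_add_finrank_ker (Ncal q r μ ν z).mulVecLin
  rw [hker, Module.finrank_fintype_fun_eq_card, Fintype.card_prod, Fintype.card_fin,
    Fintype.card_fin] at hrank
  have hsplit : ν * r = ν * min μ r + ν * (r - μ) := by
    rw [← Nat.mul_add, show min μ r + (r - μ) = r by omega]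
  rw [Matrix.rank]
  omega

theorem statement14 (q r μ ν : ℕ) (hq : 0 < q) (hr : 0 < r) (hμ : 0 < μ) (hν : 0 < ν)
    (hνq : ν ≤ q) :
    ∀ z : ℝ,
      (μ ≤ r - 1 →
        LinearMap.range (KP ν r z μ).mulVecLin = LinearMap.ker (Ncal q r μ ν z).mulVecLin ∧
        Module.finrank ℝ (LinearMap.ker (Ncal q r μ ν z).mulVecLin) = ν * (r - μ)) ∧
      (r ≤ μ → LinearMap.ker (Ncal q r μ ν z).mulVecLin = ⊥) ∧
      (Ncal q r μ ν z).rank = ν * min μ r ∧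
      (Function.Injective (Ncal q r μ ν z).mulVecLin ↔ r ≤ μ) :=
  statement14_general q r μ ν hν hνq
end
end

section
/- Fix an integer k ≥ 0 with k ≤ r−1 or k ≥ q, and define H_k(z) = W̃_r(z)·D_r^{−1}·B^k·D_q^{−1}·Ũ_q(z) ∈ ℝ^{r×q}. Then H_k is a constant function of z: for every z ∈ ℝ, H_k(z) = D_r^{−1}·B^k·D_q^{−1}. -/
open Matrix Kronecker

noncomputable section

/-!
Conjugating by the factorial matrices turns `W̃_r(z)` and `Ũ_q(z)` into `exp (z S_r)` and
`exp (z S_qᵀ)`, whose rows are the coefficient sequences of `X^i e^{zX}`. Since `B^k` is supported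
on the antidiagonal `a + b = k` with sign `(-1)^a`, the `(i, j)` entry of
`exp (z S_r) B^k exp (z S_qᵀ)` is `C(q, k+1) (-1)^i` times the coefficient of `X^k` in
`X^i e^{-zX} · X^j e^{zX} = X^{i+j}`, which is the `(i, j)` entry of `B^k`. For this the whole
antidiagonal must fit in the index ranges, i.e. `k < r` and `k < q`; if `q ≤ k` then `B^k = 0`.
-/

open Finset PowerSeries Nat

theorem rescale_neg_exp_mul_rescale_exp (z : ℝ) :
    rescale (-z) (exp ℝ) * rescale z (exp ℝ) = 1 := by
  rw [exp_mul_exp_eq_exp_add, neg_add_cancel, rescale_zero, RingHom.comp_apply,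
    constantCoeff_exp, map_one]

theorem coeff_X_pow_mul_rescale_exp (i a : ℕ) (z : ℝ) :
    coeff a (X ^ i * rescale z (exp ℝ)) = if i ≤ a then z ^ (a - i) / (a - i)! else 0 := by
  simp [coeff_X_pow_mul', coeff_rescale, coeff_exp, div_eq_mul_inv]

theorem neg_one_pow_mul_coeff_X_pow_mul_rescale_exp (i a : ℕ) (z : ℝ) :
    (-1) ^ a * coeff a (X ^ i * rescale z (exp ℝ)) =
      (-1) ^ i * coeff a (X ^ i * rescale (-z) (exp ℝ)) := by
  simp only [coeff_X_pow_mul_rescale_exp]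
  split_ifs with h
  · obtain ⟨d, rfl⟩ := Nat.exists_eq_add_of_le h
    simp only [Nat.add_sub_cancel_left, neg_pow z, pow_add]
    ring
  · simp

theorem sum_antidiagonal_neg_one_pow_mul_coeff (i j k : ℕ) (z : ℝ) :
    ∑ p ∈ antidiagonal k, (-1) ^ p.1 * coeff p.1 (X ^ i * rescale z (exp ℝ)) *
        coeff p.2 (X ^ j * rescale z (exp ℝ)) = if k = i + j then (-1) ^ i else 0 := by
  have hprod : X ^ i * rescale (-z) (exp ℝ) * (X ^ j * rescale z (exp ℝ)) = X ^ (i + j) := by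
    rw [mul_mul_mul_comm, rescale_neg_exp_mul_rescale_exp, mul_one, pow_add]
  simp_rw [neg_one_pow_mul_coeff_X_pow_mul_rescale_exp, mul_assoc, ← mul_sum, ← coeff_mul,
    hprod, coeff_X_pow, mul_ite, mul_one, mul_zero]

/-- `exp (z • Sh m)`: row `i` lists the coefficients of `X ^ i * e^{zX}`, so the `(i, a)` entry is
`z ^ (a - i) / (a - i)!` for `i ≤ a`. -/
def expSh (m : ℕ) (z : ℝ) : Matrix (Fin m) (Fin m) ℝ :=
  Matrix.of fun i a => coeff (a : ℕ) (X ^ (i : ℕ) * rescale z (exp ℝ))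

theorem Dm_inv (m : ℕ) : (Dm m)⁻¹ = diagonal fun i : Fin m => ((i : ℕ)! : ℝ)⁻¹ := by
  refine inv_eq_right_inv ?_
  rw [Dm, diagonal_mul_diagonal, ← diagonal_one]
  congr 1
  funext i
  exact mul_inv_cancel₀ (by positivity)

theorem Wt_mul_Dm_inv (m : ℕ) (z : ℝ) : Wt m z * (Dm m)⁻¹ = (Dm m)⁻¹ * expSh m z := by
  ext i a
  rw [Dm_inv, mul_diagonal, diagonal_mul]
  simp only [Wt, expSh, of_apply, coeff_X_pow_mul_rescale_exp]
  split_ifs with h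
  · rw [Nat.cast_choose ℝ h]
    field_simp
  · simp

theorem Dm_inv_mul_Ut (m : ℕ) (z : ℝ) : (Dm m)⁻¹ * Ut m z = (expSh m z)ᵀ * (Dm m)⁻¹ := by
  ext b j
  rw [Dm_inv, mul_diagonal, diagonal_mul]
  simp only [Ut, expSh, transpose_apply, of_apply, coeff_X_pow_mul_rescale_exp]
  split_ifs with h
  · rw [Nat.cast_choose ℝ h]
    field_simp
  · simp

theorem Bk_eq_zero_of_le {q r k : ℕ} (h : q ≤ k) : Bk q r k = 0 := by
  ext i j
  simp [Bk, Nat.choose_eq_zero_of_lt (Nat.lt_succ_of_le h)]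

theorem sum_fin_sum_fin_ite_add_eq_sum_antidiagonal {M : Type*} [AddCommMonoid M] {r q k : ℕ}
    (hr : k < r) (hq : k < q) (f : ℕ → ℕ → M) :
    ∑ a : Fin r, ∑ b : Fin q, (if (a : ℕ) + b = k then f a b else 0) =
      ∑ p ∈ antidiagonal k, f p.1 p.2 := by
  rw [Fin.sum_univ_eq_sum_range (fun a => ∑ b : Fin q, if a + (b : ℕ) = k then f a b else 0),
    sum_congr rfl fun a _ =>
      Fin.sum_univ_eq_sum_range (fun b => if a + b = k then f a b else 0) q,
    ← sum_product' (f := fun a b => if a + b = k then f a b else 0), ← sum_filter]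
  refine sum_congr ?_ fun _ _ => rfl
  ext ⟨a, b⟩
  simp only [mem_filter, mem_product, mem_range, HasAntidiagonal.mem_antidiagonal]
  omega

theorem expSh_mul_Bk_mul_transpose_expSh {q r k : ℕ} (hk : k ≤ r - 1 ∨ q ≤ k) (z : ℝ) :
    expSh r z * Bk q r k * (expSh q z)ᵀ = Bk q r k := by
  by_cases hqk : q ≤ k
  · simp [Bk_eq_zero_of_le hqk]
  ext i j
  have hkr : k < r := by have := i.isLt; omega
  set c : ℝ := (q.choose (k + 1) : ℝ)
  calc (expSh r z * Bk q r k * (expSh q z)ᵀ) i j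
      = ∑ a : Fin r, ∑ b : Fin q, if (a : ℕ) + b = k then c *
          ((-1) ^ (a : ℕ) * coeff a (X ^ (i : ℕ) * rescale z (exp ℝ)) *
            coeff b (X ^ (j : ℕ) * rescale z (exp ℝ))) else 0 := by
        simp only [mul_apply, sum_mul, Bk, expSh, transpose_apply, of_apply]
        rw [sum_comm]
        refine sum_congr rfl fun a _ => sum_congr rfl fun b _ => ?_
        split_ifs <;> ring
    _ = ∑ p ∈ antidiagonal k, c * ((-1) ^ p.1 * coeff p.1 (X ^ (i : ℕ) * rescale z (exp ℝ)) *
            coeff p.2 (X ^ (j : ℕ) * rescale z (exp ℝ))) :=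
        sum_fin_sum_fin_ite_add_eq_sum_antidiagonal hkr (not_le.mp hqk) fun a b =>
          c * ((-1) ^ a * coeff a (X ^ (i : ℕ) * rescale z (exp ℝ)) *
            coeff b (X ^ (j : ℕ) * rescale z (exp ℝ)))
    _ = c * if k = i + j then (-1) ^ (i : ℕ) else 0 := by
        rw [← mul_sum, sum_antidiagonal_neg_one_pow_mul_coeff]
    _ = Bk q r k i j := by
        simp only [Bk, of_apply, eq_comm (a := k)]
        split_ifs <;> ring

theorem statement17_general (q r : ℕ) (k : ℕ) (hk : k ≤ r - 1 ∨ q ≤ k) :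
    ∀ z : ℝ,
      Wt r z * (Dm r)⁻¹ * Bk q r k * (Dm q)⁻¹ * Ut q z = (Dm r)⁻¹ * Bk q r k * (Dm q)⁻¹ := by
  intro z
  calc Wt r z * (Dm r)⁻¹ * Bk q r k * (Dm q)⁻¹ * Ut q z
      = Wt r z * (Dm r)⁻¹ * Bk q r k * ((Dm q)⁻¹ * Ut q z) := by simp only [Matrix.mul_assoc]
    _ = (Dm r)⁻¹ * (expSh r z * Bk q r k * (expSh q z)ᵀ) * (Dm q)⁻¹ := by
        rw [Wt_mul_Dm_inv, Dm_inv_mul_Ut]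
        simp only [Matrix.mul_assoc]
    _ = (Dm r)⁻¹ * Bk q r k * (Dm q)⁻¹ := by rw [expSh_mul_Bk_mul_transpose_expSh hk]

theorem statement17 (q r : ℕ) (hq : 0 < q) (hr : 0 < r) (k : ℕ) (hk : k ≤ r - 1 ∨ q ≤ k) :
    ∀ z : ℝ,
      Wt r z * (Dm r)⁻¹ * Bk q r k * (Dm q)⁻¹ * Ut q z = (Dm r)⁻¹ * Bk q r k * (Dm q)⁻¹ :=
  statement17_general q r k hk
end
end
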